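/- With U as above and α = β = 1/√2, if Re⟨e₀|e₂⟩ + Re⟨e₁|e₃⟩ = 0 and Im⟨e₀|e₂⟩ + Im⟨e₁|e₃⟩ = 0, then p_{a,ā} + p_{b,b̄} = 1 − (1/2)(Re⟨e₀|e₁⟩ + Im⟨e₀|e₁⟩ + Re⟨e₂|e₃⟩ + Im⟨e₂|e₃⟩) − Re⟨e₀|e₃⟩, where p_{a,ā} and p_{b,b̄} are the mismatch probabilities in the X and Y bases respectively. -/

import Mathlib

open scoped ComplexInnerProductSpace

/-- The embedding x ↦ |0⟩⊗x of the ancilla into qubit ⊗ ancilla (modeled as E × E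
with the L² inner product, first component = |0⟩ slot, second = |1⟩ slot). -/
noncomputable def emb0 {E : Type*} [NormedAddCommGroup E] [InnerProductSpace ℂ E]
    (x : E) : WithLp 2 (E × E) := (WithLp.equiv 2 (E × E)).symm (x, 0)

/-- The embedding x ↦ |1⟩⊗x of the ancilla into qubit ⊗ ancilla. -/
noncomputable def emb1 {E : Type*} [NormedAddCommGroup E] [InnerProductSpace ℂ E]
    (x : E) : WithLp 2 (E × E) := (WithLp.equiv 2 (E × E)).symm (0, x)

/-! Unitarity of `U` enters only through `‖e₀‖² + ‖e₁‖² = ‖e₂‖² + ‖e₃‖² = 1`. Expanding the two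
mismatch probabilities, the cross terms `⟪e₁, e₂⟫` cancel, the terms `⟪e₀, e₂⟫` and `⟪e₁, e₃⟫`
appear only through the sums killed by the hypotheses, and what remains is the stated formula. -/

section

variable {E : Type*} [NormedAddCommGroup E] [InnerProductSpace ℂ E]

lemma norm_emb0 (x : E) : ‖emb0 x‖ = ‖x‖ := by
  simp [emb0]

lemma norm_emb1 (x : E) : ‖emb1 x‖ = ‖x‖ := by
  simp [emb1]

lemma norm_sq_emb0_add_emb1 (x y : E) : ‖emb0 x + emb1 y‖ ^ 2 = ‖x‖ ^ 2 + ‖y‖ ^ 2 := by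
  rw [WithLp.prod_norm_sq_eq_of_L2]
  simp [emb0, emb1]

lemma norm_sq_mismatch_x_add_norm_sq_mismatch_y (e0 e1 e2 e3 : E) :
    (1/4) * ‖e0 + e2 - e1 - e3‖ ^ 2
        + (1/4) * ‖e0 + Complex.I • e1 + Complex.I • e2 - e3‖ ^ 2
      = (1/2) * (‖e0‖ ^ 2 + ‖e1‖ ^ 2 + ‖e2‖ ^ 2 + ‖e3‖ ^ 2)
        - (1/2) * (⟪e0, e1⟫.re + ⟪e0, e1⟫.im + ⟪e2, e3⟫.re + ⟪e2, e3⟫.im)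
        - ⟪e0, e3⟫.re
        + (1/2) * (⟪e0, e2⟫.re + ⟪e1, e3⟫.re) - (1/2) * (⟪e0, e2⟫.im + ⟪e1, e3⟫.im) := by
  have norm_sq_eq_re_inner_self (x : E) : ‖x‖ ^ 2 = ⟪x, x⟫.re :=
    (inner_self_eq_norm_sq (𝕜 := ℂ) x).symm
  simp only [norm_sq_eq_re_inner_self, inner_add_left, inner_add_right, inner_sub_left,
    inner_sub_right, inner_smul_left, inner_smul_right]
  rw [← inner_conj_symm e1 e0, ← inner_conj_symm e2 e0, ← inner_conj_symm e3 e0,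
    ← inner_conj_symm e2 e1, ← inner_conj_symm e3 e1, ← inner_conj_symm e3 e2]
  simp only [Complex.add_re, Complex.sub_re, Complex.add_im, Complex.sub_im, Complex.mul_re,
    Complex.mul_im, Complex.conj_re, Complex.conj_im, Complex.I_re, Complex.I_im]
  ring

end

theorem paa_plus_pbb_general {E : Type*} [NormedAddCommGroup E]
    [InnerProductSpace ℂ E]
    (U : WithLp 2 (E × E) ≃ₗᵢ[ℂ] WithLp 2 (E × E))
    (χ e0 e1 e2 e3 : E) (hχ : ‖χ‖ = 1)
    (hU0 : U (emb0 χ) = emb0 e0 + emb1 e1)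
    (hU1 : U (emb1 χ) = emb0 e2 + emb1 e3)
    (paa pbb : ℝ)
    (hpaa : paa = (1/4) * ‖e0 + e2 - e1 - e3‖^2)
    (hpbb : pbb = (1/4) * ‖e0 + Complex.I • e1 + Complex.I • e2 - e3‖^2)
    (hre : ⟪e0, e2⟫.re + ⟪e1, e3⟫.re = 0)
    (him : ⟪e0, e2⟫.im + ⟪e1, e3⟫.im = 0) :
    paa + pbb = 1 - (1/2) * (⟪e0, e1⟫.re + ⟪e0, e1⟫.im + ⟪e2, e3⟫.re + ⟪e2, e3⟫.im)
      - ⟪e0, e3⟫.re := by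
  have hn01 : ‖e0‖ ^ 2 + ‖e1‖ ^ 2 = 1 := by
    rw [← norm_sq_emb0_add_emb1, ← hU0, U.norm_map, norm_emb0, hχ, one_pow]
  have hn23 : ‖e2‖ ^ 2 + ‖e3‖ ^ 2 = 1 := by
    rw [← norm_sq_emb0_add_emb1, ← hU1, U.norm_map, norm_emb1, hχ, one_pow]
  rw [hpaa, hpbb, norm_sq_mismatch_x_add_norm_sq_mismatch_y, hre, him]
  linarith

/-- for α = β = 1/√2, under the unitarity constraints
Re⟨e₀|e₂⟩+Re⟨e₁|e₃⟩ = 0 and Im⟨e₀|e₂⟩+Im⟨e₁|e₃⟩ = 0,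
p_{a,ā} + p_{b,b̄} = 1 − ½(Re⟨e₀|e₁⟩+Im⟨e₀|e₁⟩+Re⟨e₂|e₃⟩+Im⟨e₂|e₃⟩) − Re⟨e₀|e₃⟩. -/
theorem paa_plus_pbb {E : Type*} [NormedAddCommGroup E]
    [InnerProductSpace ℂ E] [FiniteDimensional ℂ E]
    (U : WithLp 2 (E × E) ≃ₗᵢ[ℂ] WithLp 2 (E × E))
    (χ e0 e1 e2 e3 : E) (hχ : ‖χ‖ = 1)
    (hU0 : U (emb0 χ) = emb0 e0 + emb1 e1)
    (hU1 : U (emb1 χ) = emb0 e2 + emb1 e3)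
    (paa pbb : ℝ)
    (hpaa : paa = (1/4) * ‖e0 + e2 - e1 - e3‖^2)
    (hpbb : pbb = (1/4) * ‖e0 + Complex.I • e1 + Complex.I • e2 - e3‖^2)
    (hre : ⟪e0, e2⟫.re + ⟪e1, e3⟫.re = 0)
    (him : ⟪e0, e2⟫.im + ⟪e1, e3⟫.im = 0) :
    paa + pbb = 1 - (1/2) * (⟪e0, e1⟫.re + ⟪e0, e1⟫.im + ⟪e2, e3⟫.re + ⟪e2, e3⟫.im)
      - ⟪e0, e3⟫.re :=
  paa_plus_pbb_general U χ e0 e1 e2 e3 hχ hU0 hU1 paa pbb hpaa hpbb hre him
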